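/- Every word of length 2^n occurring as a factor (subword) of ξ can be obtained from one of the words w_n b, w_n c, w_n d by a cyclic permutation of letters. -/

import Mathlib

inductive A : Type
  | a | b | c | d
deriving DecidableEq

def subst : A → List A
  | A.a => [A.a, A.c, A.a]
  | A.b => [A.d]
  | A.c => [A.b]
  | A.d => [A.c]

def substW (u : List A) : List A := u.flatMap subst

def wrd (n : ℕ) : List A := substW^[n - 1] [A.a]

def ltr (n : ℕ) : List A := substW^[n - 1] [A.c]

def seg (ξ : ℕ → A) (s m : ℕ) : List A := (List.range m).map fun i => ξ (s + 1 + i)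

def IsFixed (ξ : ℕ → A) : Prop :=
  ∀ N : ℕ, seg ξ 0 ((substW (seg ξ 0 N)).length) = substW (seg ξ 0 N)

/-!
Since `w_{m+1} = w_m ℓ w_m` with `ℓ = σ^{m-1}(c)` a single letter among `b, c, d`, for `n ≤ m`
the word `w_m` is a concatenation of blocks `w_n x` with `x ≠ a`. As ξ begins with every `w_m`,
reading ξ modulo `2^n` gives `w_n` except at the positions `≡ -1 (mod 2^n)`, which carry letters
`b, c, d`. A factor of length `2^n` meets exactly one such position, hence is a rotation of `w_n x`.
-/

theorem substW_append (u v : List A) : substW (u ++ v) = substW u ++ substW v :=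
  List.flatMap_append

theorem substW_iterate_append (k : ℕ) (u v : List A) :
    substW^[k] (u ++ v) = substW^[k] u ++ substW^[k] v := by
  induction k generalizing u v with
  | zero => rfl
  | succ k ih => simp only [Function.iterate_succ_apply, substW_append, ih]

theorem substW_iterate_singleton_of_ne_a (k : ℕ) {x : A} (hx : x ≠ A.a) :
    ∃ y, y ≠ A.a ∧ substW^[k] [x] = [y] := by
  induction k generalizing x with
  | zero => exact ⟨x, hx, rfl⟩
  | succ k ih =>
    rw [Function.iterate_succ_apply]
    cases x with
    | a => exact absurd rfl hx
    | b => exact ih (x := A.d) nofun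
    | c => exact ih (x := A.b) nofun
    | d => exact ih (x := A.c) nofun

theorem exists_ltr_eq (n : ℕ) : ∃ x, x ≠ A.a ∧ ltr n = [x] :=
  substW_iterate_singleton_of_ne_a _ nofun

theorem wrd_succ {n : ℕ} (hn : n ≠ 0) : wrd (n + 1) = substW (wrd n) := by
  obtain ⟨k, rfl⟩ := Nat.exists_eq_succ_of_ne_zero hn
  exact Function.iterate_succ_apply' substW k [A.a]

theorem wrd_succ_eq_append {n : ℕ} (hn : n ≠ 0) : wrd (n + 1) = wrd n ++ ltr n ++ wrd n := by
  obtain ⟨k, rfl⟩ := Nat.exists_eq_succ_of_ne_zero hn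
  simp only [wrd, ltr, Nat.add_sub_cancel, Function.iterate_succ_apply,
    ← substW_iterate_append]
  rfl

theorem length_wrd_add_one {n : ℕ} (hn : n ≠ 0) : (wrd n).length + 1 = 2 ^ n := by
  induction n with
  | zero => exact absurd rfl hn
  | succ n ih =>
    rcases Nat.eq_zero_or_pos n with rfl | hpos
    · rfl
    obtain ⟨x, -, hx⟩ := exists_ltr_eq n
    rw [wrd_succ_eq_append hpos.ne', hx, pow_succ, ← ih hpos.ne']
    simp only [List.length_append, List.length_singleton]
    ring

theorem seg_zero_length_wrd {ξ : ℕ → A} (hξ : IsFixed ξ) {n : ℕ} (hn : n ≠ 0) :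
    seg ξ 0 (wrd n).length = wrd n := by
  induction n with
  | zero => exact absurd rfl hn
  | succ n ih =>
    rcases Nat.eq_zero_or_pos n with rfl | hpos
    · -- `σ x` begins with `x` only for `x = a`
      have h1 := hξ 1
      cases hx : ξ 1 <;> simp_all [seg, substW, subst, wrd]
    · have h := hξ (wrd n).length
      rwa [ih hpos.ne', ← wrd_succ hpos.ne'] at h

theorem exists_getElem?_wrd_eq {n m : ℕ} (hn : n ≠ 0) (hnm : n ≤ m) {j : ℕ}
    (hj : j < (wrd m).length) :
    ∃ x, x ≠ A.a ∧ (wrd m)[j]? = (wrd n ++ [x])[j % 2 ^ n]? := by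
  induction m, hnm using Nat.le_induction generalizing j with
  | base =>
    have hjn : j < 2 ^ n := by have := length_wrd_add_one hn; omega
    rw [Nat.mod_eq_of_lt hjn]
    exact ⟨A.c, nofun, (List.getElem?_append_left hj).symm⟩
  | succ m hnm ih =>
    have hm : m ≠ 0 := by omega
    have hlen := length_wrd_add_one hm
    have hlen_n := length_wrd_add_one hn
    obtain ⟨x, hx, hltr⟩ := exists_ltr_eq m
    rw [wrd_succ_eq_append hm, hltr, List.append_assoc] at hj ⊢
    obtain ⟨k, hk⟩ : 2 ^ n ∣ 2 ^ m := Nat.pow_dvd_pow 2 hnm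
    simp only [List.length_append, List.length_singleton] at hj
    rcases lt_trichotomy j (wrd m).length with hlt | rfl | hgt
    · rw [List.getElem?_append_left hlt]
      exact ih hlt
    · refine ⟨x, hx, ?_⟩
      have hmod : (wrd m).length % 2 ^ n = (wrd n).length := by
        have : (wrd m).length = 2 ^ n * (k - 1) + (wrd n).length := by
          rw [Nat.mul_sub_one]
          have : 2 ^ n ≤ 2 ^ m := Nat.pow_le_pow_right two_pos hnm
          omega
        rw [this, Nat.mul_add_mod, Nat.mod_eq_of_lt (by omega)]
      simp [hmod]
    · have hj' : j - 2 ^ m < (wrd m).length := by omega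
      have hmod : j % 2 ^ n = (j - 2 ^ m) % 2 ^ n := by
        conv_lhs => rw [show j = j - 2 ^ m + 2 ^ n * k by omega]
        exact Nat.add_mul_mod_self_left _ _ _
      have hidx : j - (wrd m).length - [x].length = j - 2 ^ m := by
        simp only [List.length_singleton]; omega
      rw [List.getElem?_append_right hgt.le, List.getElem?_append_right (by simp; omega), hidx,
        hmod]
      exact ih hj'

theorem getElem?_wrd_of_isFixed {ξ : ℕ → A} (hξ : IsFixed ξ) {m j : ℕ} (hm : m ≠ 0)
    (hj : j < (wrd m).length) : (wrd m)[j]? = some (ξ (j + 1)) := by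
  rw [← seg_zero_length_wrd hξ hm] at hj ⊢
  simp only [seg, List.length_map, List.length_range] at hj
  simp [seg, hj, Nat.add_comm 1 j]

theorem exists_getElem?_block_eq_of_isFixed {ξ : ℕ → A} (hξ : IsFixed ξ) {n : ℕ} (hn : n ≠ 0)
    (j : ℕ) :
    ∃ x, x ≠ A.a ∧ (wrd n ++ [x])[j % 2 ^ n]? = some (ξ (j + 1)) := by
  have hj : j < (wrd (n + j + 1)).length := by
    have := length_wrd_add_one (n := n + j + 1) (by omega)
    have := Nat.lt_two_pow_self (n := n + j + 1)
    omega
  obtain ⟨x, hx, h⟩ := exists_getElem?_wrd_eq hn (by omega) hj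
  exact ⟨x, hx, h ▸ getElem?_wrd_of_isFixed hξ (by omega) hj⟩

theorem Nat.eq_of_add_mod_eq_add_mod {L s i t : ℕ} (h : (s + i) % L = (s + t) % L) (hi : i < L)
    (ht : t < L) : i = t := by
  have := Nat.ModEq.add_left_cancel' s h
  rwa [Nat.ModEq, Nat.mod_eq_of_lt hi, Nat.mod_eq_of_lt ht] at this

theorem exists_map_range_eq_rotate {α : Type*} (w : List α) (p : α → Prop) (f : ℕ → α)
    (hf : ∀ j, ∃ x, p x ∧ (w ++ [x])[j % (w.length + 1)]? = some (f j)) (s : ℕ) :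
    ∃ x, p x ∧ (List.range (w.length + 1)).map (fun i => f (s + i)) = (w ++ [x]).rotate s := by
  set L := w.length + 1 with hL
  have hL0 : 0 < L := Nat.succ_pos _
  -- `s + t` is the one position of the window congruent to `w.length` modulo `L`
  set t := w.length - s % L
  have hhole : (s + t) % L = w.length := by
    have hs := Nat.div_add_mod s L
    have hr := Nat.mod_lt s hL0
    rw [show s + t = w.length + L * (s / L) by omega, Nat.add_mul_mod_self_left,
      Nat.mod_eq_of_lt (by omega)]
  obtain ⟨x, hx, hfx⟩ := hf (s + t)
  rw [hhole] at hfx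
  simp only [List.getElem?_concat_length, Option.some.injEq] at hfx
  refine ⟨x, hx, List.ext_getElem? fun i => ?_⟩
  rcases lt_or_ge i L with hi | hi
  · have hlen : i < (w ++ [x]).length := by simpa [hL] using hi
    rw [List.getElem?_map, List.getElem?_range hi, Option.map_some, List.getElem?_rotate hlen,
      List.length_append, List.length_singleton, Nat.add_comm i s]
    obtain ⟨y, -, hfy⟩ := hf (s + i)
    rcases Nat.lt_or_ge ((s + i) % L) w.length with hk | hk
    · rw [List.getElem?_append_left hk] at hfy ⊢
      exact hfy.symm
    · have hk' : (s + i) % L = (s + t) % L := by have := Nat.mod_lt (s + i) hL0; omega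
      obtain rfl := Nat.eq_of_add_mod_eq_add_mod hk' hi (by omega)
      rw [← hL, hhole, hfx, List.getElem?_concat_length]
  · rw [List.getElem?_eq_none (by simpa using hi), List.getElem?_eq_none (by simpa [hL] using hi)]

theorem stmt8 (ξ : ℕ → A) (hξ : IsFixed ξ) :
    ∀ n : ℕ, 1 ≤ n → ∀ u : List A, u.length = 2 ^ n → (∃ s : ℕ, seg ξ s (2 ^ n) = u) →
      ∃ lt : A, (lt = A.b ∨ lt = A.c ∨ lt = A.d) ∧
        ∃ u₁ u₂ : List A, wrd n ++ [lt] = u₁ ++ u₂ ∧ u = u₂ ++ u₁ := by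
  rintro n hn _ - ⟨s, rfl⟩
  have hn0 : n ≠ 0 := Nat.one_le_iff_ne_zero.mp hn
  have hL := length_wrd_add_one hn0
  obtain ⟨x, hx, hrot⟩ := exists_map_range_eq_rotate (wrd n) (· ≠ A.a) (fun j => ξ (j + 1))
    (hL ▸ exists_getElem?_block_eq_of_isFixed hξ hn0) s
  have hseg : seg ξ s (2 ^ n) = (wrd n ++ [x]).rotate s := by
    rw [← hrot, hL]
    simp only [seg, Nat.add_right_comm s 1]
  refine ⟨x, by cases x <;> simp_all, _, _, (List.take_append_drop (s % 2 ^ n) _).symm, ?_⟩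
  rw [hseg, List.rotate_eq_drop_append_take_mod]
  simp [hL]
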